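/- Let (g_1,...,g_K) be multinomially distributed with parameters g and (p_1,...,p_K), and let a_1,...,a_K be fixed reals in [0, â] with â > 0 and β = 2·Σ_i p_i a_i² > 0. Then for any M ∈ (0, β/â), Pr[Σ_i p_i a_i ≥ Σ_i (g_i/g)·a_i − M] ≥ 1 − exp(−g M² / (2β)). -/

import Mathlib

/-!
Chernoff's method for the sum `S = ∑ⱼ a (Xⱼ) = ∑ᵢ gᵢ aᵢ` of `g` i.i.d. bounded summands. Since
`eˣ ≤ 1 + x + x²` for `|x| ≤ 1`, each summand has `E e^{t a(X)} ≤ exp (t m + t² β / 2)` whenever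
`t â ≤ 1`, where `m = ∑ pᵢ aᵢ`. Independence multiplies these bounds, and Markov's inequality gives
`P(S ≥ g (m + M)) ≤ exp (-g (t M - t² β / 2))`. The optimal `t = M / β` is admissible exactly
because `M < β / â`, and yields the exponent `-g M² / (2β)`.
-/

open MeasureTheory ProbabilityTheory Finset Real

section FiniteLaw

variable {Ω ι : Type*} [MeasurableSpace Ω] {μ : Measure Ω} [IsFiniteMeasure μ]
  [Fintype ι] [MeasurableSpace ι] [MeasurableSingletonClass ι] {Z : Ω → ι} {p : ι → ℝ}

lemma integral_comp_eq_sum_of_law (hZ : Measurable Z) (hp : ∀ i, 0 ≤ p i)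
    (hlaw : ∀ i, μ {ω | Z ω = i} = ENNReal.ofReal (p i)) (f : ι → ℝ) :
    ∫ ω, f (Z ω) ∂μ = ∑ i, p i * f i := by
  rw [← integral_map hZ.aemeasurable Integrable.of_finite.aestronglyMeasurable,
    integral_fintype Integrable.of_finite]
  refine sum_congr rfl fun i _ => ?_
  rw [map_measureReal_apply hZ (measurableSet_singleton i), measureReal_def]
  simp [Set.preimage, hlaw, hp i]

lemma mgf_comp_le_of_law (hZ : Measurable Z) (hp : ∀ i, 0 ≤ p i) (hpsum : ∑ i, p i = 1)
    (hlaw : ∀ i, μ {ω | Z ω = i} = ENNReal.ofReal (p i)) (a : ι → ℝ) {t : ℝ}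
    (hta : ∀ i, |t * a i| ≤ 1) :
    mgf (fun ω => a (Z ω)) μ t ≤
      exp (t * ∑ i, p i * a i + t ^ 2 * ∑ i, p i * a i ^ 2) := by
  have hexp : ∀ i, exp (t * a i) ≤ 1 + t * a i + (t * a i) ^ 2 := fun i => by
    have := abs_exp_sub_one_sub_id_le (hta i)
    linarith [le_abs_self (exp (t * a i) - 1 - t * a i)]
  calc mgf (fun ω => a (Z ω)) μ t = ∑ i, p i * exp (t * a i) :=
        integral_comp_eq_sum_of_law hZ hp hlaw fun i => exp (t * a i)
    _ ≤ ∑ i, p i * (1 + t * a i + (t * a i) ^ 2) :=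
        sum_le_sum fun i _ => mul_le_mul_of_nonneg_left (hexp i) (hp i)
    _ = ∑ i, p i + t * ∑ i, p i * a i + t ^ 2 * ∑ i, p i * a i ^ 2 := by
        simp only [mul_sum, ← sum_add_distrib]
        exact sum_congr rfl fun i _ => by ring
    _ ≤ _ := by
        rw [hpsum, add_assoc, add_comm 1]
        exact add_one_le_exp _

end FiniteLaw

lemma measure_sum_ge_le_of_mgf_le {Ω κ : Type*} [MeasurableSpace Ω] {μ : Measure Ω}
    [IsFiniteMeasure μ] [Fintype κ] {Y : κ → Ω → ℝ} (hY : ∀ j, Measurable (Y j))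
    (hindep : iIndepFun Y μ) {t c : ℝ} (ht : 0 ≤ t)
    (hint : ∀ j, Integrable (fun ω => exp (t * Y j ω)) μ) (hmgf : ∀ j, mgf (Y j) μ t ≤ exp c)
    (ε : ℝ) :
    μ.real {ω | ε ≤ ∑ j, Y j ω} ≤ exp (-t * ε + Fintype.card κ * c) := by
  calc μ.real {ω | ε ≤ ∑ j, Y j ω} ≤ exp (-t * ε) * mgf (∑ j, Y j) μ t := by
        simpa only [Finset.sum_apply] using
          measure_ge_le_exp_mul_mgf ε ht
            (hindep.integrable_exp_mul_sum hY (s := univ) fun j _ => hint j)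
    _ ≤ exp (-t * ε) * ∏ _j : κ, exp c := by
        rw [hindep.mgf_sum hY]
        gcongr with j
        exacts [fun j _ => mgf_nonneg, hmgf j]
    _ = _ := by rw [prod_const, card_univ, ← exp_nat_mul, ← exp_add]

lemma sum_card_fiber_mul {κ ι : Type*} [Fintype κ] [Fintype ι] [DecidableEq ι] (X : κ → ι)
    (a : ι → ℝ) :
    ∑ i, (#{j | X j = i} : ℝ) * a i = ∑ j, a (X j) := by
  rw [← sum_fiberwise univ X fun j => a (X j)]
  refine sum_congr rfl fun i _ => ?_
  rw [sum_congr rfl fun j hj => by rw [(mem_filter.1 hj).2], sum_const, nsmul_eq_mul]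

lemma one_sub_le_prob_of_compl_le {Ω : Type*} [MeasurableSpace Ω] {μ : Measure Ω}
    [IsProbabilityMeasure μ] {s : Set Ω} {b : ENNReal} (h : μ sᶜ ≤ b) : 1 - b ≤ μ s := by
  rw [tsub_le_iff_right, ← measure_univ (μ := μ), ← Set.union_compl_self s]
  exact (measure_union_le s sᶜ).trans (add_le_add_right h _)

theorem stmt_8_general {Ω : Type*} [MeasurableSpace Ω]
    (μ : Measure Ω) [IsProbabilityMeasure μ]
    (K : ℕ) (g : ℕ) (hg : 0 < g)
    (p : Fin K → ℝ) (hp : ∀ i, 0 ≤ p i) (hpsum : ∑ i, p i = 1)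
    (X : Fin g → Ω → Fin K) (hmeas : ∀ j, Measurable (X j))
    (hindep : iIndepFun (m := fun _ => inferInstance) X μ)
    (hlaw : ∀ j i, μ {ω | X j ω = i} = ENNReal.ofReal (p i))
    (cnt : Fin K → Ω → ℕ)
    (hcnt : ∀ i ω, cnt i ω = (Finset.univ.filter (fun j => X j ω = i)).card)
    (a : Fin K → ℝ) (ahat : ℝ) (hahat : 0 < ahat)
    (ha : ∀ i, a i ∈ Set.Icc 0 ahat)
    (β : ℝ) (hβ : β = 2 * ∑ i, p i * a i ^ 2) (hβpos : 0 < β)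
    (M : ℝ) (hM : M ∈ Set.Ioo 0 (β / ahat)) :
    μ {ω | ∑ i, p i * a i ≥ (∑ i, ((cnt i ω : ℝ) / g) * a i) - M} ≥
      1 - ENNReal.ofReal (Real.exp (-(g : ℝ) * M ^ 2 / (2 * β))) := by
  obtain ⟨hM0, hMβ⟩ := hM
  set m := ∑ i, p i * a i
  set t := M / β
  have ht : 0 < t := div_pos hM0 hβpos
  have hta : ∀ i, |t * a i| ≤ 1 := fun i => by
    rw [abs_of_nonneg (mul_nonneg ht.le (ha i).1)]
    calc t * a i ≤ t * ahat := mul_le_mul_of_nonneg_left (ha i).2 ht.le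
      _ ≤ 1 := by
        rw [div_mul_eq_mul_div, div_le_one hβpos]
        exact ((lt_div_iff₀ hahat).1 hMβ).le
  have hmeas_a : Measurable a := measurable_of_countable a
  have hvar : ∑ i, p i * a i ^ 2 = β / 2 := by rw [hβ]; ring
  have htail : μ.real {ω | g * (m + M) ≤ ∑ j, a (X j ω)} ≤ exp (-g * M ^ 2 / (2 * β)) := by
    calc _ ≤ exp (-t * (g * (m + M)) + Fintype.card (Fin g) * (t * m + t ^ 2 * (β / 2))) :=
          measure_sum_ge_le_of_mgf_le (Y := fun j ω => a (X j ω))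
            (fun j => hmeas_a.comp (hmeas j)) (hindep.comp _ fun _ => hmeas_a) ht.le
            (fun j => (Integrable.of_finite (f := fun i => exp (t * a i))).comp_measurable
              (hmeas j))
            (fun j => (mgf_comp_le_of_law (hmeas j) hp hpsum (hlaw j) a hta).trans_eq
              (by rw [hvar])) _
      _ = _ := by
        rw [Fintype.card_fin]
        congr 1
        simp only [t]
        field_simp
        ring
  have hevent : {ω | m ≥ ∑ i, (cnt i ω : ℝ) / g * a i - M}ᶜ ⊆
      {ω | g * (m + M) ≤ ∑ j, a (X j ω)} := fun ω hω => by
    simp only [Set.mem_compl_iff, Set.mem_ofPred_eq, not_le, lt_sub_iff_add_lt,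
      div_mul_eq_mul_div, ← sum_div, hcnt, sum_card_fiber_mul,
      lt_div_iff₀ (Nat.cast_pos.mpr hg : (0 : ℝ) < g)] at hω ⊢
    linarith
  refine one_sub_le_prob_of_compl_le ((measure_mono hevent).trans ?_)
  rw [← ofReal_measureReal]
  exact ENNReal.ofReal_le_ofReal htail

/-- Multinomial counts modeled as counts of `g` i.i.d. categorical samples. -/
theorem stmt_8 {Ω : Type*} [MeasurableSpace Ω]
    (μ : Measure Ω) [IsProbabilityMeasure μ]
    (K : ℕ) (hK : 0 < K) (g : ℕ) (hg : 0 < g)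
    (p : Fin K → ℝ) (hp : ∀ i, 0 ≤ p i) (hpsum : ∑ i, p i = 1)
    (X : Fin g → Ω → Fin K) (hmeas : ∀ j, Measurable (X j))
    (hindep : iIndepFun (m := fun _ => inferInstance) X μ)
    (hlaw : ∀ j i, μ {ω | X j ω = i} = ENNReal.ofReal (p i))
    (cnt : Fin K → Ω → ℕ)
    (hcnt : ∀ i ω, cnt i ω = (Finset.univ.filter (fun j => X j ω = i)).card)
    (a : Fin K → ℝ) (ahat : ℝ) (hahat : 0 < ahat)
    (ha : ∀ i, a i ∈ Set.Icc 0 ahat)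
    (β : ℝ) (hβ : β = 2 * ∑ i, p i * a i ^ 2) (hβpos : 0 < β)
    (M : ℝ) (hM : M ∈ Set.Ioo 0 (β / ahat)) :
    μ {ω | ∑ i, p i * a i ≥ (∑ i, ((cnt i ω : ℝ) / g) * a i) - M} ≥
      1 - ENNReal.ofReal (Real.exp (-(g : ℝ) * M ^ 2 / (2 * β))) :=
  stmt_8_general μ K g hg p hp hpsum X hmeas hindep hlaw cnt hcnt a ahat hahat ha β hβ hβpos M hM
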